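/- Let H be a real vector space, D ⊆ H, and let f : D → H be such that for every α̂ > 0 the map m ↦ m − α̂ f(m) is surjective from D onto H. Then for every α > 0, every k > 0, and every r ∈ H, the map m ↦ m − α(k(r − m) + f(m)) is surjective from D onto H; explicitly, for any y₁ ∈ H there exists m ∈ D with y₁ = m − α(k(r − m) + f(m)). (Part (ii) of the proof of the paper's Theorem 3.1: the range condition for the controlled Landau–Lifshitz operator.) -/

import Mathlib

/-! The feedback term only rescales the problem: writing `c = 1 + α k > 0`,
`m - α (k (r - m) + f m) = c (m - (α / c) f m) - α k r`, so solving the controlled equation with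
right-hand side `y₁` is solving the uncontrolled one with step `α / c` and right-hand side
`c⁻¹ (y₁ + α k r)`. -/

theorem sub_smul_feedback_add_eq {𝕜 H : Type*} [Field 𝕜] [AddCommGroup H] [Module 𝕜 H]
    {α k : 𝕜} (hc : 1 + α * k ≠ 0) (r m v : H) :
    m - α • (k • (r - m) + v) = (1 + α * k) • (m - (α / (1 + α * k)) • v) - (α * k) • r := by
  rw [smul_sub (1 + α * k), smul_smul, mul_div_cancel₀ _ hc]
  module

theorem controlled_operator_range_condition
    {H : Type*} [AddCommGroup H] [Module ℝ H]
    (D : Set H) (f : H → H)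
    (hrange : ∀ α' : ℝ, 0 < α' → ∀ y : H, ∃ m ∈ D, m - α' • f m = y)
    (α k : ℝ) (hα : 0 < α) (hk : 0 < k) (r : H) :
    ∀ y₁ : H, ∃ m ∈ D, y₁ = m - α • (k • (r - m) + f m) := by
  intro y₁
  have hc : 0 < 1 + α * k := by positivity
  obtain ⟨m, hmD, hm⟩ :=
    hrange (α / (1 + α * k)) (by positivity) ((1 + α * k)⁻¹ • (y₁ + (α * k) • r))
  refine ⟨m, hmD, ?_⟩
  rw [sub_smul_feedback_add_eq hc.ne', hm, smul_inv_smul₀ hc.ne', add_sub_cancel_right]
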